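/- If * is a linear involution (*² = +id) on a vector space W (the case D = 2 mod 4), then the subgroup of GL(2,ℝ) preserving the set of pairs with *F¹ = F², *F² = F¹ and additionally preserving the quadratic form ‖F¹‖² + ‖F²‖² and orientation consists only of ±identity, realizing the ℤ₂ duality group. -/
import Mathlib


open scoped RealInnerProductSpace

/-- Let `*` be a linear involution (`*² = id`) on a real inner product space `W`
(the case `D ≡ 2 mod 4`), compatible with the inner product, and suppose `W`
contains a vector `v` with `v, *v` linearly independent.  A matrix
`R = (a b; c d) ∈ GL(2,ℝ)` acting componentwise that preserves the set of chiral
pairs (`*F¹ = F²`, `*F² = F¹`), preserves the quadratic form `‖F¹‖² + ‖F²‖²`,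
and preserves orientation (`det R > 0`) must be `±` the identity: the duality
group is `ℤ₂`. -/
theorem chiral_duality_group_is_Z2
    {W : Type*} [NormedAddCommGroup W] [InnerProductSpace ℝ W]
    (star : W →ₗ[ℝ] W)
    (hsq : ∀ x, star (star x) = x)
    (hinner : ∀ x y, ⟪star x, star y⟫ = ⟪x, y⟫)
    (hW : ∃ v : W, LinearIndependent ℝ ![v, star v])
    (a b c d : ℝ)
    (hdet : 0 < a * d - b * c)
    (hchiral : ∀ F1 F2 : W, star F1 = F2 →
        star (a • F1 + b • F2) = c • F1 + d • F2)
    (hnorm : ∀ F1 F2 : W, ‖a • F1 + b • F2‖ ^ 2 + ‖c • F1 + d • F2‖ ^ 2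
        = ‖F1‖ ^ 2 + ‖F2‖ ^ 2) :
    (a = 1 ∧ b = 0 ∧ c = 0 ∧ d = 1) ∨ (a = -1 ∧ b = 0 ∧ c = 0 ∧ d = -1) := by
  obtain ⟨v, hv⟩ := hW
  have hvne : v ≠ 0 := by
    intro h
    exact (hv.ne_zero 0) (by simpa using h)
  -- chiral condition forces c = b, d = a
  have hch := hchiral v (star v) rfl
  have hlhs : star (a • v + b • star v) = b • v + a • star v := by
    simp [map_add, map_smul, hsq v, add_comm]
  have key : (c - b) • v + (d - a) • star v = 0 := by
    have : c • v + d • star v = b • v + a • star v := by rw [← hch, hlhs]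
    have := sub_eq_zero.mpr this
    rw [← this]; module
  have hcoef := Fintype.linearIndependent_iff.mp hv ![c - b, d - a]
    (by simpa [Fin.sum_univ_two] using key)
  have hcb : c = b := by have := hcoef 0; simp at this; linarith
  have hda : d = a := by have := hcoef 1; simp at this; linarith
  subst hcb hda
  have hv2 : ‖v‖ ^ 2 ≠ 0 := pow_ne_zero 2 (norm_ne_zero_iff.mpr hvne)
  -- norm condition with F2 = 0 : d² + c² = 1
  have h1 := hnorm v 0
  simp only [smul_zero, add_zero, norm_zero, norm_smul, Real.norm_eq_abs,
    mul_pow, sq_abs] at h1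
  have hab1 : d ^ 2 + c ^ 2 = 1 := by
    have : (d ^ 2 + c ^ 2) * ‖v‖ ^ 2 = 1 * ‖v‖ ^ 2 := by ring_nf; ring_nf at h1; linarith
    exact mul_right_cancel₀ hv2 this
  -- norm condition with F1 = F2 = v : (d+c)² = 1, hence dc = 0
  have h2 := hnorm v v
  have hvv : d • v + c • v = (d + c) • v := by module
  have hvv2 : c • v + d • v = (c + d) • v := by module
  rw [hvv, hvv2] at h2
  simp only [norm_smul, Real.norm_eq_abs, mul_pow, sq_abs] at h2
  have hab0 : d * c = 0 := by
    have : ((d + c) ^ 2 + (c + d) ^ 2) * ‖v‖ ^ 2 = 2 * ‖v‖ ^ 2 := by ring_nf; ring_nf at h2; linarith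
    have h3 : (d + c) ^ 2 + (c + d) ^ 2 = 2 := mul_right_cancel₀ hv2 this
    nlinarith
  have hdet' : c ^ 2 < d ^ 2 := by nlinarith
  have hb0 : c = 0 := by
    rcases mul_eq_zero.mp hab0 with h | h
    · exfalso; nlinarith
    · exact h
  subst hb0
  have ha : (d - 1) * (d + 1) = 0 := by nlinarith
  rcases mul_eq_zero.mp ha with h | h
  · left; refine ⟨by linarith, rfl, rfl, by linarith⟩
  · right; refine ⟨by linarith, rfl, rfl, by linarith⟩
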